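/- Fix κ > 0, c > 0 and, for each integer N ≥ 2, parameters σ_N > 0, δ_N > 0, l_N = N(N−1)/κ, and R_N(0) ≥ 0 with sup_N R_N(0) < ∞; define R_N(t) = σ_N²δ_N⁻¹ l_N (1 − exp(−δ_N t/l_N)) + exp(−δ_N t/l_N) R_N(0) for t ≥ 0. Let t : ℕ → (0,∞) and set α_N = κ δ_N t(N)/N². If α_N → c and σ_N² t(N) → ∞ as N → ∞, then R_N(t(N)) / (σ_N² t(N)) → (1 − e^{−c})/c as N → ∞. -/

import Mathlib

/-!
Writing `β_N = δ_N t(N) / l_N`, the formula for `R_N` gives the exact decomposition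
`R_N(t(N)) / (σ_N² t(N)) = (1 - e^{-β_N}) / β_N + e^{-β_N} R_N(0) / (σ_N² t(N))`.
Since `l_N = N(N-1)/κ`, we have `β_N = α_N · N/(N-1) → c`, so the first term tends to
`(1 - e^{-c})/c` by continuity; the second is a bounded quantity divided by `σ_N² t(N) → ∞`.
-/

open Real Filter Topology

lemma tendsto_natCast_div_natCast_sub_one :
    Tendsto (fun N : ℕ => (N : ℝ) / (N - 1)) atTop (𝓝 1) := by
  simpa only [sub_eq_add_neg] using tendsto_natCast_div_add_atTop (-1 : ℝ)

lemma tendsto_div_of_tendsto_scale {κ c : ℝ} (hκ : κ ≠ 0) {δ t l α : ℕ → ℝ}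
    (hl : ∀ N : ℕ, 2 ≤ N → l N = (N : ℝ) * ((N : ℝ) - 1) / κ)
    (hα : ∀ N : ℕ, α N = κ * δ N * t N / (N : ℝ) ^ 2) (hαc : Tendsto α atTop (𝓝 c)) :
    Tendsto (fun N => δ N * t N / l N) atTop (𝓝 c) := by
  have hlim := hαc.mul tendsto_natCast_div_natCast_sub_one
  rw [mul_one] at hlim
  refine hlim.congr' ?_
  filter_upwards [eventually_ge_atTop 2] with N hN
  have hN₂ : (2 : ℝ) ≤ N := by exact_mod_cast hN
  have hN₀ : (N : ℝ) ≠ 0 := by positivity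
  have hN₁ : (N : ℝ) - 1 ≠ 0 := by linarith
  rw [hα, hl N hN]
  field_simp

lemma relaxation_div_eq {σ δ l t R₀ : ℝ} (hβ : δ * t / l ≠ 0) (hs : σ ^ 2 * t ≠ 0) :
    (σ ^ 2 * δ⁻¹ * l * (1 - exp (-δ * t / l)) + exp (-δ * t / l) * R₀) / (σ ^ 2 * t) =
      (1 - exp (-(δ * t / l))) / (δ * t / l) + exp (-(δ * t / l)) * R₀ / (σ ^ 2 * t) := by
  obtain ⟨⟨hδ, ht⟩, hl⟩ : (δ ≠ 0 ∧ t ≠ 0) ∧ l ≠ 0 := by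
    simpa only [div_ne_zero_iff, mul_ne_zero_iff] using hβ
  have hσ : σ ≠ 0 := by rintro rfl; simp at hs
  rw [neg_mul, neg_div]
  field_simp

lemma tendsto_one_sub_exp_neg_div {ι : Type*} {L : Filter ι} {β : ι → ℝ} {c : ℝ}
    (hβ : Tendsto β L (𝓝 c)) (hc : c ≠ 0) :
    Tendsto (fun i => (1 - exp (-β i)) / β i) L (𝓝 ((1 - exp (-c)) / c)) :=
  ((continuous_const.sub (continuous_exp.comp continuous_neg)).continuousAt.div
    continuousAt_id hc).tendsto.comp hβ

lemma tendsto_exp_neg_mul_div_atTop {ι : Type*} {L : Filter ι} {β r s : ι → ℝ} {C : ℝ}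
    (hβ : ∀ᶠ i in L, 0 ≤ β i) (hr : ∀ᶠ i in L, 0 ≤ r i ∧ r i ≤ C)
    (hs : Tendsto s L atTop) :
    Tendsto (fun i => exp (-β i) * r i / s i) L (𝓝 0) := by
  refine tendsto_of_tendsto_of_tendsto_of_le_of_le' tendsto_const_nhds
    ((tendsto_const_nhds (x := C)).div_atTop hs) ?_ ?_
  all_goals
    filter_upwards [hβ, hr, hs.eventually_gt_atTop 0] with i hβi ⟨hr₀, hrC⟩ hsi
  · positivity
  · gcongr
    calc exp (-β i) * r i ≤ 1 * r i := by gcongr; exact exp_le_one_iff.mpr (by linarith)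
      _ ≤ C := by linarith

theorem stmt_5_general (κ c : ℝ) (hκ : 0 < κ) (hc : 0 < c)
    (σ δ : ℕ → ℝ)
    (R₀ : ℕ → ℝ) (hR₀ : ∀ N, 2 ≤ N → 0 ≤ R₀ N) (hsup : ∃ C : ℝ, ∀ N, 2 ≤ N → R₀ N ≤ C)
    (l : ℕ → ℝ) (hl : ∀ N : ℕ, 2 ≤ N → l N = (N : ℝ) * ((N : ℝ) - 1) / κ)
    (R : ℕ → ℝ → ℝ)
    (hR : ∀ N : ℕ, 2 ≤ N → ∀ t : ℝ, 0 ≤ t → R N t =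
      (σ N) ^ 2 * (δ N)⁻¹ * l N * (1 - Real.exp (-(δ N) * t / l N))
        + Real.exp (-(δ N) * t / l N) * R₀ N)
    (t : ℕ → ℝ) (ht : ∀ N, 0 < t N)
    (α : ℕ → ℝ) (hα : ∀ N : ℕ, α N = κ * δ N * t N / (N : ℝ) ^ 2)
    (hαc : Tendsto α atTop (nhds c))
    (hst : Tendsto (fun N : ℕ => (σ N) ^ 2 * t N) atTop atTop) :
    Tendsto (fun N : ℕ => R N (t N) / ((σ N) ^ 2 * t N)) atTop
      (nhds ((1 - Real.exp (-c)) / c)) := by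
  obtain ⟨C, hC⟩ := hsup
  have hβ := tendsto_div_of_tendsto_scale hκ.ne' hl hα hαc
  have hβ_pos : ∀ᶠ N in atTop, 0 < δ N * t N / l N := hβ.eventually (lt_mem_nhds hc)
  have hR₀_bdd : ∀ᶠ N in atTop, 0 ≤ R₀ N ∧ R₀ N ≤ C := by
    filter_upwards [eventually_ge_atTop 2] with N hN using ⟨hR₀ N hN, hC N hN⟩
  have hlim := (tendsto_one_sub_exp_neg_div hβ hc.ne').add
    (tendsto_exp_neg_mul_div_atTop (hβ_pos.mono fun _ => le_of_lt) hR₀_bdd hst)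
  rw [add_zero] at hlim
  refine hlim.congr' ?_
  filter_upwards [eventually_ge_atTop 2, hβ_pos, hst.eventually_gt_atTop 0]
    with N hN hβN hsN
  rw [hR N hN (t N) (ht N).le, relaxation_div_eq hβN.ne' hsN.ne']

/-- varying parameters, critical time scale.
With `l_N = N(N−1)/κ`,
`R_N(t) = σ_N²δ_N⁻¹ l_N (1 − exp(−δ_N t/l_N)) + exp(−δ_N t/l_N) R_N(0)` and
`α_N = κ δ_N t(N)/N²`, if `α_N → c > 0` and `σ_N² t(N) → ∞`, then
`R_N(t(N)) / (σ_N² t(N)) → (1 − e^{−c})/c`. -/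
theorem stmt_5 (κ c : ℝ) (hκ : 0 < κ) (hc : 0 < c)
    (σ δ : ℕ → ℝ) (hσ : ∀ N, 2 ≤ N → 0 < σ N) (hδ : ∀ N, 2 ≤ N → 0 < δ N)
    (R₀ : ℕ → ℝ) (hR₀ : ∀ N, 2 ≤ N → 0 ≤ R₀ N) (hsup : ∃ C : ℝ, ∀ N, 2 ≤ N → R₀ N ≤ C)
    (l : ℕ → ℝ) (hl : ∀ N : ℕ, 2 ≤ N → l N = (N : ℝ) * ((N : ℝ) - 1) / κ)
    (R : ℕ → ℝ → ℝ)
    (hR : ∀ N : ℕ, 2 ≤ N → ∀ t : ℝ, 0 ≤ t → R N t =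
      (σ N) ^ 2 * (δ N)⁻¹ * l N * (1 - Real.exp (-(δ N) * t / l N))
        + Real.exp (-(δ N) * t / l N) * R₀ N)
    (t : ℕ → ℝ) (ht : ∀ N, 0 < t N)
    (α : ℕ → ℝ) (hα : ∀ N : ℕ, α N = κ * δ N * t N / (N : ℝ) ^ 2)
    (hαc : Tendsto α atTop (nhds c))
    (hst : Tendsto (fun N : ℕ => (σ N) ^ 2 * t N) atTop atTop) :
    Tendsto (fun N : ℕ => R N (t N) / ((σ N) ^ 2 * t N)) atTop
      (nhds ((1 - Real.exp (-c)) / c)) :=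
  stmt_5_general κ c hκ hc σ δ R₀ hR₀ hsup l hl R hR t ht α hα hαc hst
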